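/- arXiv:1507.03784 — 6 statements merged into one kernel-verified Lean document; each statement's English description precedes it below -/
import Mathlib

section
/- Let M be a smooth manifold, let e₁, e₂ : M → EuclideanSpace ℝ (Fin m) be smooth maps with ‖e₁ x‖ = 1, ‖e₂ x‖ = 1 and ⟪e₁ x, e₂ x⟫ = 0 for all x, and let θ : M → ℝ be smooth, satisfying mfderiv θ x X = ⟪mfderiv e₂ x X, e₁ x⟫ for all x and X. For t ∈ ℝ define φ_t := (cos (θ + t)) • e₁ + (sin (θ + t)) • e₂, and let Π_x denote the orthogonal projection onto the orthogonal complement of the span of e₁ x and e₂ x. Fix x ∈ M and X ∈ T_xM. If there exist t, t' ∈ ℝ with sin (t − t') ≠ 0 such that mfderiv φ_t x X = 0 and mfderiv φ_{t'} x X = 0, then Π_x (mfderiv e₁ x X) = 0 and Π_x (mfderiv e₂ x X) = 0. (Hence each curve of the parallel family φ_t fails to be an immersion in a given direction for at most one value of t modulo π unless the Gauss map is degenerate in that direction.) -/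
open scoped Manifold InnerProductSpace

/-!
Differentiating `φ_t = cos (θ + t) • e₁ + sin (θ + t) • e₂`, the terms carrying `dθ` lie in
`span {e₁, e₂}`, so `Π (dφ_t X) = cos (θ + t) • Π (de₁ X) + sin (θ + t) • Π (de₂ X)`.
Vanishing at `t` and `t'` gives a 2 × 2 linear system for `Π (de₁ X)`, `Π (de₂ X)` whose
determinant is `± sin (t - t') ≠ 0`.
-/

/-- `mfderiv` of a map into a normed vector space (model `𝓘(ℝ, F)`), with its codomain
identified with the vector space itself (`TangentSpace 𝓘(ℝ, F) y` is by definition `F`). -/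
noncomputable def mfderivE
    {E : Type*} [NormedAddCommGroup E] [NormedSpace ℝ E]
    {H : Type*} [TopologicalSpace H] (I : ModelWithCorners ℝ E H)
    {M : Type*} [TopologicalSpace M] [ChartedSpace H M]
    {F : Type*} [NormedAddCommGroup F] [NormedSpace ℝ F]
    (f : M → F) (x : M) : TangentSpace I x →L[ℝ] F :=
  mfderiv I 𝓘(ℝ, F) f x

theorem eq_zero_and_eq_zero_of_smul_add_smul_eq_zero {K V : Type*} [Field K] [AddCommGroup V]
    [Module K V] {a b a' b' : K} {u v : V} (hdet : a * b' - a' * b ≠ 0)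
    (h : a • u + b • v = 0) (h' : a' • u + b' • v = 0) : u = 0 ∧ v = 0 := by
  have hu : (a * b' - a' * b) • u = b' • (a • u + b • v) - b • (a' • u + b' • v) := by module
  have hv : (a * b' - a' * b) • v = a • (a' • u + b' • v) - a' • (a • u + b • v) := by module
  simp only [h, h', smul_zero, sub_self, smul_eq_zero] at hu hv
  exact ⟨hu.resolve_left hdet, hv.resolve_left hdet⟩

theorem eq_zero_and_eq_zero_of_cos_smul_add_sin_smul_eq_zero {V : Type*} [AddCommGroup V]
    [Module ℝ V] {α β : ℝ} {u v : V} (hsin : Real.sin (α - β) ≠ 0)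
    (hα : Real.cos α • u + Real.sin α • v = 0) (hβ : Real.cos β • u + Real.sin β • v = 0) :
    u = 0 ∧ v = 0 := by
  refine eq_zero_and_eq_zero_of_smul_add_smul_eq_zero ?_ hα hβ
  rw [Real.sin_sub] at hsin
  contrapose! hsin
  linarith

section
open Submodule
variable {E : Type*} [NormedAddCommGroup E] [NormedSpace ℝ E]
    {H : Type*} [TopologicalSpace H] {I : ModelWithCorners ℝ E H}
    {M : Type*} [TopologicalSpace M] [ChartedSpace H M] {x : M}

theorem mvfderiv_smul_add_smul_apply {F : Type*} [NormedAddCommGroup F] [NormedSpace ℝ F]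
    {a b : M → ℝ} {f g : M → F}
    (ha : MDifferentiableAt I 𝓘(ℝ) a x) (hb : MDifferentiableAt I 𝓘(ℝ) b x)
    (hf : MDifferentiableAt I 𝓘(ℝ, F) f x) (hg : MDifferentiableAt I 𝓘(ℝ, F) g x)
    (X : TangentSpace I x) :
    mvfderiv I (fun p => a p • f p + b p • g p) x X =
      a x • mvfderiv I f x X + b x • mvfderiv I g x X
        + mvfderiv I a x X • f x + mvfderiv I b x X • g x := by
  rw [mvfderiv_fun_add (ha.fun_smul hf) (hb.fun_smul hg), mvfderiv_fun_smul ha hf,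
    mvfderiv_fun_smul hb hg]
  simp only [add_apply, FunLike.coe_smul, Pi.smul_apply, ContinuousLinearMap.smulRight_apply]
  abel

theorem orthogonalProjection_mfderivE_smul_add_smul_apply {F : Type*} [NormedAddCommGroup F]
    [InnerProductSpace ℝ F] [CompleteSpace F] {a b : M → ℝ} {f g : M → F}
    (ha : MDifferentiableAt I 𝓘(ℝ) a x) (hb : MDifferentiableAt I 𝓘(ℝ) b x)
    (hf : MDifferentiableAt I 𝓘(ℝ, F) f x) (hg : MDifferentiableAt I 𝓘(ℝ, F) g x)
    (X : TangentSpace I x) :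
    (span ℝ {f x, g x})ᗮ.orthogonalProjectionOnto
        (mfderivE I (fun p => a p • f p + b p • g p) x X) =
      a x • (span ℝ {f x, g x})ᗮ.orthogonalProjectionOnto (mfderivE I f x X) +
        b x • (span ℝ {f x, g x})ᗮ.orthogonalProjectionOnto (mfderivE I g x X) := by
  set P := (span ℝ {f x, g x})ᗮ.orthogonalProjectionOnto
  have hPf : P (f x) = 0 := orthogonalProjectionOnto_orthogonal_apply_eq_zero
    (subset_span (by simp))
  have hPg : P (g x) = 0 := orthogonalProjectionOnto_orthogonal_apply_eq_zero
    (subset_span (by simp))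
  -- `mfderivE` and Mathlib's `mvfderiv` agree definitionally (`fromTangentSpace` is the identity).
  change P (mvfderiv I _ x X) = a x • P (mvfderiv I f x X) + b x • P (mvfderiv I g x X)
  simp [mvfderiv_smul_add_smul_apply ha hb hf hg, hPf, hPg]
end

theorem stmt5_general
    {E : Type*} [NormedAddCommGroup E] [NormedSpace ℝ E]
    {H : Type*} [TopologicalSpace H] (I : ModelWithCorners ℝ E H)
    {M : Type*} [TopologicalSpace M] [ChartedSpace H M]
    {m : ℕ} {e₁ e₂ : M → EuclideanSpace ℝ (Fin m)} {θ : M → ℝ}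
    (he₁ : ContMDiff I 𝓘(ℝ, EuclideanSpace ℝ (Fin m)) (⊤ : ℕ∞) e₁)
    (he₂ : ContMDiff I 𝓘(ℝ, EuclideanSpace ℝ (Fin m)) (⊤ : ℕ∞) e₂)
    (hθ : ContMDiff I 𝓘(ℝ) (⊤ : ℕ∞) θ)
    (φ : ℝ → M → EuclideanSpace ℝ (Fin m))
    (hφdef : ∀ t : ℝ, φ t = fun x =>
      Real.cos (θ x + t) • e₁ x + Real.sin (θ x + t) • e₂ x)
    (x : M) (X : TangentSpace I x) (t t' : ℝ)
    (hsin : Real.sin (t - t') ≠ 0)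
    (h₁ : mfderivE I (φ t) x X = 0)
    (h₂ : mfderivE I (φ t') x X = 0) :
    Submodule.orthogonalProjectionOnto (Submodule.span ℝ {e₁ x, e₂ x})ᗮ (mfderivE I e₁ x X) = 0 ∧
    Submodule.orthogonalProjectionOnto (Submodule.span ℝ {e₁ x, e₂ x})ᗮ (mfderivE I e₂ x X) = 0 := by
  have hproj (s : ℝ) (hs : mfderivE I (φ s) x X = 0) :
      Real.cos (θ x + s) • Submodule.orthogonalProjectionOnto (Submodule.span ℝ {e₁ x, e₂ x})ᗮ
          (mfderivE I e₁ x X) +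
        Real.sin (θ x + s) • Submodule.orthogonalProjectionOnto (Submodule.span ℝ {e₁ x, e₂ x})ᗮ
          (mfderivE I e₂ x X) = 0 := by
    have hθs : MDifferentiableAt I 𝓘(ℝ) (fun p => θ p + s) x :=
      (hθ.mdifferentiableAt (by simp)).add mdifferentiableAt_const
    have hcosθ : MDifferentiableAt I 𝓘(ℝ) (fun p => Real.cos (θ p + s)) x :=
      Real.differentiableAt_cos.comp_mdifferentiableAt hθs
    have hsinθ : MDifferentiableAt I 𝓘(ℝ) (fun p => Real.sin (θ p + s)) x :=
      Real.differentiableAt_sin.comp_mdifferentiableAt hθs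
    rw [hφdef] at hs
    rw [← orthogonalProjection_mfderivE_smul_add_smul_apply hcosθ hsinθ
      (he₁.mdifferentiableAt (by simp)) (he₂.mdifferentiableAt (by simp)), hs, map_zero]
  exact eq_zero_and_eq_zero_of_cos_smul_add_sin_smul_eq_zero (by rwa [add_sub_add_left_eq_sub])
    (hproj t h₁) (hproj t' h₂)

/-- In the parallel family `φ_t = cos (θ + t) • e₁ + sin (θ + t) • e₂` associated with a
Lagrangian congruence (`dθ = ⟪de₂, e₁⟫`), if the derivative in a direction `X` vanishes for
two values `t, t'` with `sin (t − t') ≠ 0`, then the projections of `de₁(X)` and `de₂(X)`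
onto the orthogonal complement of `span {e₁ x, e₂ x}` both vanish. -/
theorem stmt5
    {E : Type*} [NormedAddCommGroup E] [NormedSpace ℝ E]
    {H : Type*} [TopologicalSpace H] (I : ModelWithCorners ℝ E H)
    {M : Type*} [TopologicalSpace M] [ChartedSpace H M]
    [IsManifold I (⊤ : ℕ∞) M]
    {m : ℕ} {e₁ e₂ : M → EuclideanSpace ℝ (Fin m)} {θ : M → ℝ}
    (he₁ : ContMDiff I 𝓘(ℝ, EuclideanSpace ℝ (Fin m)) (⊤ : ℕ∞) e₁)
    (he₂ : ContMDiff I 𝓘(ℝ, EuclideanSpace ℝ (Fin m)) (⊤ : ℕ∞) e₂)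
    (hθ : ContMDiff I 𝓘(ℝ) (⊤ : ℕ∞) θ)
    (hn₁ : ∀ x : M, ‖e₁ x‖ = 1) (hn₂ : ∀ x : M, ‖e₂ x‖ = 1)
    (horth : ∀ x : M, ⟪e₁ x, e₂ x⟫_ℝ = 0)
    (hθ' : ∀ x : M, ∀ X : TangentSpace I x,
      mfderivE I θ x X = ⟪mfderivE I e₂ x X, e₁ x⟫_ℝ)
    (φ : ℝ → M → EuclideanSpace ℝ (Fin m))
    (hφdef : ∀ t : ℝ, φ t = fun x =>
      Real.cos (θ x + t) • e₁ x + Real.sin (θ x + t) • e₂ x)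
    (x : M) (X : TangentSpace I x) (t t' : ℝ)
    (hsin : Real.sin (t - t') ≠ 0)
    (h₁ : mfderivE I (φ t) x X = 0)
    (h₂ : mfderivE I (φ t') x X = 0) :
    Submodule.orthogonalProjectionOnto (Submodule.span ℝ {e₁ x, e₂ x})ᗮ (mfderivE I e₁ x X) = 0 ∧
    Submodule.orthogonalProjectionOnto (Submodule.span ℝ {e₁ x, e₂ x})ᗮ (mfderivE I e₂ x X) = 0 :=
  stmt5_general I he₁ he₂ hθ φ hφdef x X t t' hsin h₁ h₂
end

section
/- Let V be a finite-dimensional real inner product space, k a natural number, and B : Fin k → (V →ₗ[ℝ] V) a family of linear maps such that each B i is self-adjoint, the maps pairwise commute (B i ∘ B j = B j ∘ B i for all i, j), and for every nonzero x ∈ V there exists i with B i x ≠ 0 (the joint kernel is trivial). Then there exist real coefficients a : Fin k → ℝ such that the linear combination ∑ i, a i • B i is bijective. -/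
open scoped InnerProductSpace

open Module.End LinearMap in
/-- Given a family of pairwise commuting self-adjoint operators on a finite-dimensional real
inner product space whose joint kernel is trivial, some linear combination of them is
bijective. -/
theorem stmt8
    {V : Type*} [NormedAddCommGroup V] [InnerProductSpace ℝ V] [FiniteDimensional ℝ V]
    {k : ℕ} (B : Fin k → (V →ₗ[ℝ] V))
    (hsa : ∀ i : Fin k, ∀ x y : V, ⟪B i x, y⟫_ℝ = ⟪x, B i y⟫_ℝ)
    (hcomm : ∀ i j : Fin k, B i ∘ₗ B j = B j ∘ₗ B i)
    (hker : ∀ x : V, x ≠ 0 → ∃ i : Fin k, B i x ≠ 0) :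
    ∃ a : Fin k → ℝ, Function.Bijective (∑ i : Fin k, a i • B i) := by
  classical
  -- joint eigenvalue vectors
  set Λ : Set (Fin k → ℝ) := {χ | (⨅ i, eigenspace (B i) (χ i)) ≠ ⊥} with hΛ
  have hΛfin : Λ.Finite := by
    have : Λ ⊆ Set.univ.pi (fun i : Fin k => {μ | Module.End.HasEigenvalue (B i) μ}) := by
      intro χ hχ
      obtain ⟨x, hx, hx0⟩ := Submodule.exists_mem_ne_zero_of_ne_bot hχ
      intro i _
      exact hasEigenvalue_of_hasEigenvector ⟨(Submodule.mem_iInf _).mp hx i, hx0⟩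
    exact Set.Finite.subset
      (Set.Finite.pi (fun i : Fin k => Module.End.finite_hasEigenvalue (B i))) this
  -- each joint eigenvalue vector is nonzero
  have hΛne : ∀ χ ∈ Λ, χ ≠ 0 := by
    rintro χ hχ rfl
    obtain ⟨x, hx, hx0⟩ := Submodule.exists_mem_ne_zero_of_ne_bot hχ
    obtain ⟨i, hi⟩ := hker x hx0
    apply hi
    have := (Submodule.mem_iInf _).mp hx i
    rw [mem_eigenspace_iff] at this
    simpa using this
  -- pick a not orthogonal to any χ ∈ Λ
  have : ∃ a : Fin k → ℝ, ∀ χ ∈ Λ, (∑ i, a i * χ i) ≠ 0 := by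
    have hfin : Finite Λ := hΛfin
    set p : Λ → Subspace ℝ (Fin k → ℝ) :=
      fun χ => LinearMap.ker (∑ i, (χ : Fin k → ℝ) i • LinearMap.proj i) with hp
    have hne : ∀ χ, p χ ≠ ⊤ := by
      rintro ⟨χ, hχ⟩ h
      obtain ⟨j, hj⟩ := Function.ne_iff.mp (hΛne χ hχ)
      have : Pi.single j (1:ℝ) ∈ p ⟨χ, hχ⟩ := h ▸ Submodule.mem_top
      simp only [hp, LinearMap.mem_ker, LinearMap.sum_apply, LinearMap.smul_apply,
        LinearMap.proj_apply] at this
      rw [Finset.sum_eq_single j] at this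
      · simp at this; tauto
      · intro b _ hb; simp [Pi.single_apply, hb]
      · simp
    have hcover : ⋃ χ, (p χ : Set (Fin k → ℝ)) ≠ Set.univ := by
      intro h
      obtain ⟨χ, hχ⟩ := Subspace.exists_eq_top_of_iUnion_eq_univ h
      exact hne χ hχ
    obtain ⟨a, ha⟩ := Set.ne_univ_iff_exists_notMem _ |>.mp hcover
    simp only [Set.mem_iUnion, not_exists, SetLike.mem_coe] at ha
    refine ⟨a, fun χ hχ h => ha ⟨χ, hχ⟩ ?_⟩
    simp only [hp, LinearMap.mem_ker, LinearMap.sum_apply, LinearMap.smul_apply,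
      LinearMap.proj_apply, smul_eq_mul]
    rw [← h]
    exact Finset.sum_congr rfl fun i _ => mul_comm _ _
  obtain ⟨a, ha⟩ := this
  refine ⟨a, ?_⟩
  set S : V →ₗ[ℝ] V := ∑ i, a i • B i with hS
  -- S acts as the scalar ∑ a i * χ i on the joint eigenspace of χ
  have hscal : ∀ (χ : Fin k → ℝ) (x : V), x ∈ (⨅ i, eigenspace (B i) (χ i)) →
      S x = (∑ i, a i * χ i) • x := by
    intro χ x hx
    have hx' : ∀ i, B i x = χ i • x := fun i => by
      have := (Submodule.mem_iInf _).mp hx i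
      rwa [mem_eigenspace_iff] at this
    simp only [hS, LinearMap.sum_apply, LinearMap.smul_apply, Finset.sum_smul]
    exact Finset.sum_congr rfl fun i _ => by rw [hx' i, smul_smul]
  -- S is surjective
  have hsurj : Function.Surjective S := by
    rw [← LinearMap.range_eq_top]
    rw [← top_le_iff, ← LinearMap.IsSymmetric.iSup_iInf_eq_top_of_commute hsa
      (fun i j _ => by simpa [Commute, SemiconjBy, Module.End.mul_eq_comp] using hcomm i j)]
    apply iSup_le
    intro χ x hx
    by_cases hχ : χ ∈ Λ
    · set c : ℝ := ∑ i, a i * χ i with hc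
      have hc0 : c ≠ 0 := ha χ hχ
      refine ⟨c⁻¹ • x, ?_⟩
      rw [map_smul, hscal χ x hx, smul_smul, inv_mul_cancel₀ hc0, one_smul]
    · have : (⨅ i, eigenspace (B i) (χ i)) = ⊥ := by simpa [hΛ] using hχ
      rw [this] at hx
      simp only [Submodule.mem_bot] at hx
      subst hx
      exact Submodule.zero_mem _
  have hcoe : (∑ i : Fin k, ⇑(a i • B i)) = ⇑S := by
    funext x
    simp [hS]
  rw [hcoe]
  exact ⟨(LinearMap.injective_iff_surjective).mpr hsurj, hsurj⟩
end

section
/- Let V be a real inner product space, Q the quadratic form Q v = −‖v‖², and ι : V → CliffordAlgebra Q the canonical embedding. Let n ≥ 1, let e : Fin n → V be an orthonormal family, and let u : V → V be a linear map such that for each j, u(e j) is orthogonal to all of e 0, …, e (n−1). Set ε_n := (−1)^(n(n+1)/2+1), P := ι(e 0) * ι(e 1) * ⋯ * ι(e (n−1)), and U := ∑_{j=0}^{n−1} ι(e 0) * ⋯ * ι(e (j−1)) * ι(u(e j)) * ι(e (j+1)) * ⋯ * ι(e (n−1)) (the Clifford element representing the tangent vector u to the Grassmannian). Then for every ξ in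 the span of e 0, …, e (n−1): ι(u ξ) = −(ε_n/2) • (ι(ξ) * P * U + U * P * ι(ξ)). -/
/-!
Put `P = ι(e 0) ⋯ ι(e (n-1))` and `w j = ι(e j) ι(u (e j))`. As `u (e j)` is orthogonal to every
`e i`, `w j` commutes with `ι (e i)` for `i ≠ j` and anticommutes with `ι (e j)`, so the `j`-th
summand of `U` equals `w j * P = -(P * w j)`. Since `P * P = (-1) ^ (n(n+1)/2)` is a scalar,
`ι ξ * P * U + U * P * ι ξ = P² * ∑ j, [w j, ι ξ]`, and `[w j, ι ξ] = 2 ⟪e j, ξ⟫ ι (u (e j))`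
sums to `2 ι (u ξ)`.
-/

open scoped InnerProductSpace

section AntiCommuting

variable {A : Type*} [Ring A]

theorem commute_mul_of_anticomm {a b c : A} (ha : a * c = -(c * a)) (hb : b * c = -(c * b)) :
    Commute (a * b) c := by
  unfold Commute SemiconjBy
  rw [mul_assoc, hb, mul_neg, ← mul_assoc, ha, neg_mul, neg_neg, mul_assoc]

theorem List.prod_mul_of_anticomm (l : List A) {y : A} (h : ∀ x ∈ l, x * y = -(y * x)) :
    l.prod * y = (-1) ^ l.length * (y * l.prod) := by
  induction l with
  | nil => simp
  | cons a t ih =>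
    rw [List.prod_cons, mul_assoc, ih fun x hx => h x (List.mem_cons_of_mem _ hx), ← mul_assoc,
      ← ((Commute.neg_one_left a).pow_left _).eq, mul_assoc, ← mul_assoc a, h a List.mem_cons_self,
      List.length_cons, pow_succ]
    simp only [mul_neg, neg_mul, mul_one, mul_assoc]

theorem List.prod_ofFn_mul_self_of_anticomm {n : ℕ} (f : Fin n → A)
    (hsq : ∀ i, f i * f i = -1) (hanti : ∀ i j, i ≠ j → f i * f j = -(f j * f i)) :
    (List.ofFn f).prod * (List.ofFn f).prod = (-1) ^ (n * (n + 1) / 2) := by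
  induction n with
  | zero => simp
  | succ n ih =>
    set T := (List.ofFn fun i : Fin n => f i.succ).prod
    have hT : T * f 0 = (-1) ^ n * (f 0 * T) := by
      simpa using List.prod_mul_of_anticomm (List.ofFn fun i : Fin n => f i.succ)
        (y := f 0) (by simpa using fun i => hanti i.succ 0 (Fin.succ_ne_zero i))
    have hexp : (n + 1) * (n + 1 + 1) / 2 = n * (n + 1) / 2 + n + 1 := by
      rw [show (n + 1) * (n + 1 + 1) = n * (n + 1) + (n + 1) * 2 by ring,
        Nat.add_mul_div_right _ _ two_pos, add_assoc]
    rw [List.ofFn_succ, List.prod_cons, mul_assoc, ← mul_assoc T, hT, hexp, pow_succ, pow_add,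
      ← ih (fun i => f i.succ) (fun i => hsq i.succ)
        (fun i j hij => hanti i.succ j.succ (Fin.succ_injective _ |>.ne hij))]
    simp only [mul_assoc, ← mul_assoc (f 0) (f 0), hsq, ((Commute.neg_one_left _).pow_left n).eq]
    noncomm_ring

theorem List.prod_ofFn_ite_mul_right {n : ℕ} (f : Fin n → A) (j : Fin n) {w : A}
    (hw : ∀ i, i ≠ j → Commute w (f i)) :
    (List.ofFn fun i => if i = j then f i * w else f i).prod = (List.ofFn f).prod * w := by
  induction n with
  | zero => exact j.elim0
  | succ n ih =>
    simp only [List.ofFn_succ, List.prod_cons, mul_assoc]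
    induction j using Fin.cases with
    | zero =>
      have hT : Commute w (List.ofFn fun i : Fin n => f i.succ).prod :=
        Commute.list_prod_right _ _ (by simpa using fun i => hw i.succ (Fin.succ_ne_zero i))
      simp [Fin.succ_ne_zero, mul_assoc, hT.eq]
    | succ j =>
      simpa [(Fin.succ_ne_zero j).symm, Fin.succ_inj] using
        congrArg (f 0 * ·) (ih (fun i => f i.succ) j fun i hi => hw i.succ (by simpa using hi))

theorem List.prod_ofFn_ite_mul_left {n : ℕ} (f : Fin n → A) (j : Fin n) {w : A}
    (hw : ∀ i, i ≠ j → Commute w (f i)) :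
    (List.ofFn fun i => if i = j then w * f i else f i).prod = w * (List.ofFn f).prod := by
  induction n with
  | zero => exact j.elim0
  | succ n ih =>
    simp only [List.ofFn_succ, List.prod_cons]
    induction j using Fin.cases with
    | zero => simp [Fin.succ_ne_zero, mul_assoc]
    | succ j =>
      simp only [(Fin.succ_ne_zero j).symm, if_false, Fin.succ_inj]
      rw [ih (fun i => f i.succ) j fun i hi => hw i.succ (by simpa using hi), ← mul_assoc,
        ← (hw 0 (Fin.succ_ne_zero j).symm).eq, mul_assoc]

end AntiCommuting

namespace CliffordAlgebra

variable {V : Type*} [NormedAddCommGroup V] [InnerProductSpace ℝ V] {Q : QuadraticForm ℝ V}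

theorem polar_eq_neg_two_mul_inner (hQ : ∀ v : V, Q v = -‖v‖ ^ 2) (v w : V) :
    QuadraticMap.polar Q v w = -2 * ⟪v, w⟫_ℝ := by
  simp only [QuadraticMap.polar, hQ, norm_add_sq_real]
  ring

theorem ι_mul_ι_add_swap_eq_inner (hQ : ∀ v : V, Q v = -‖v‖ ^ 2) (v w : V) :
    ι Q v * ι Q w + ι Q w * ι Q v = algebraMap ℝ _ (-2 * ⟪v, w⟫_ℝ) := by
  rw [ι_mul_ι_add_swap, polar_eq_neg_two_mul_inner hQ]

theorem ι_mul_ι_comm_of_inner_eq_zero (hQ : ∀ v : V, Q v = -‖v‖ ^ 2) {v w : V}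
    (h : ⟪v, w⟫_ℝ = 0) : ι Q v * ι Q w = -(ι Q w * ι Q v) :=
  eq_neg_of_add_eq_zero_left <| by rw [ι_mul_ι_add_swap_eq_inner hQ, h, mul_zero, map_zero]

theorem ι_mul_self_eq_neg_one (hQ : ∀ v : V, Q v = -‖v‖ ^ 2) {v : V} (hv : ‖v‖ = 1) :
    ι Q v * ι Q v = -1 := by
  rw [ι_sq_scalar, hQ, hv]
  simp

theorem ι_mul_ι_mul_ι_sub_of_inner_eq_zero (hQ : ∀ v : V, Q v = -‖v‖ ^ 2) {a v ξ : V}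
    (hv : ⟪v, ξ⟫_ℝ = 0) :
    ι Q a * ι Q v * ι Q ξ - ι Q ξ * (ι Q a * ι Q v) = (2 * ⟪a, ξ⟫_ℝ) • ι Q v := by
  calc ι Q a * ι Q v * ι Q ξ - ι Q ξ * (ι Q a * ι Q v)
      = -((ι Q a * ι Q ξ + ι Q ξ * ι Q a) * ι Q v) := by
        rw [mul_assoc, ι_mul_ι_comm_of_inner_eq_zero hQ hv]
        noncomm_ring
    _ = (2 * ⟪a, ξ⟫_ℝ) • ι Q v := by
        rw [ι_mul_ι_add_swap_eq_inner hQ, Algebra.smul_def, ← neg_mul, ← map_neg, neg_mul,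
          neg_neg]

noncomputable def blade {R M : Type*} [CommRing R] [AddCommGroup M] [Module R M]
    (Q : QuadraticForm R M) {n : ℕ} (e : Fin n → M) : CliffordAlgebra Q :=
  (List.ofFn fun i => ι Q (e i)).prod

/-- The derivative of `t ↦ blade Q (e + t • u ∘ e)` at `t = 0`, expanded by the Leibniz rule. -/
noncomputable def bladeDeriv {R M : Type*} [CommRing R] [AddCommGroup M] [Module R M]
    (Q : QuadraticForm R M) {n : ℕ} (e : Fin n → M) (u : M →ₗ[R] M) : CliffordAlgebra Q :=
  ∑ j, blade Q fun i => if i = j then u (e i) else e i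

theorem blade_mul_self (hQ : ∀ v : V, Q v = -‖v‖ ^ 2) {n : ℕ} {e : Fin n → V}
    (he : Orthonormal ℝ e) :
    blade Q e * blade Q e = algebraMap ℝ _ ((-1) ^ (n * (n + 1) / 2)) := by
  rw [blade, List.prod_ofFn_mul_self_of_anticomm _ (fun i => ι_mul_self_eq_neg_one hQ (he.1 i))
    fun i j hij => ι_mul_ι_comm_of_inner_eq_zero hQ (he.2 hij)]
  simp

theorem commute_ι_mul_ι_of_orthonormal (hQ : ∀ v : V, Q v = -‖v‖ ^ 2) {n : ℕ} {e : Fin n → V}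
    (he : Orthonormal ℝ e) {j : Fin n} {v : V} (hv : ∀ i, ⟪v, e i⟫_ℝ = 0) (i : Fin n)
    (hij : i ≠ j) : Commute (ι Q (e j) * ι Q v) (ι Q (e i)) :=
  commute_mul_of_anticomm (ι_mul_ι_comm_of_inner_eq_zero hQ (he.2 hij.symm))
    (ι_mul_ι_comm_of_inner_eq_zero hQ (hv i))

theorem blade_ite_eq_mul_blade (hQ : ∀ v : V, Q v = -‖v‖ ^ 2) {n : ℕ} {e : Fin n → V}
    (he : Orthonormal ℝ e) (j : Fin n) {v : V} (hv : ∀ i, ⟪v, e i⟫_ℝ = 0) :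
    blade Q (fun i => if i = j then v else e i) = ι Q (e j) * ι Q v * blade Q e := by
  have hv' : ι Q (e j) * ι Q v * ι Q (e j) = ι Q v := by
    rw [mul_assoc, ι_mul_ι_comm_of_inner_eq_zero hQ (hv j), mul_neg, ← mul_assoc,
      ι_mul_self_eq_neg_one hQ (he.1 j), neg_one_mul, neg_neg]
  rw [blade, blade, ← List.prod_ofFn_ite_mul_left _ j (commute_ι_mul_ι_of_orthonormal hQ he hv)]
  congr 2 with i
  split_ifs with h
  · rw [h, hv']
  · rfl

theorem blade_ite_eq_neg_blade_mul (hQ : ∀ v : V, Q v = -‖v‖ ^ 2) {n : ℕ} {e : Fin n → V}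
    (he : Orthonormal ℝ e) (j : Fin n) {v : V} (hv : ∀ i, ⟪v, e i⟫_ℝ = 0) :
    blade Q (fun i => if i = j then v else e i) = -(blade Q e * (ι Q (e j) * ι Q v)) := by
  have hv' : ι Q (e j) * -(ι Q (e j) * ι Q v) = ι Q v := by
    rw [mul_neg, ← mul_assoc, ι_mul_self_eq_neg_one hQ (he.1 j), neg_one_mul, neg_neg]
  rw [blade, blade, ← mul_neg, ← List.prod_ofFn_ite_mul_right _ j
    (commute_ι_mul_ι_of_orthonormal hQ he hv · · |>.neg_left)]
  congr 2 with i
  split_ifs with h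
  · rw [h, hv']
  · rfl

theorem ι_mul_blade_mul_bladeDeriv_add (hQ : ∀ v : V, Q v = -‖v‖ ^ 2) {n : ℕ} {e : Fin n → V}
    (he : Orthonormal ℝ e) (u : V →ₗ[ℝ] V) (hu : ∀ j i : Fin n, ⟪u (e j), e i⟫_ℝ = 0) {ξ : V}
    (hξ : ∀ j, ⟪u (e j), ξ⟫_ℝ = 0) :
    ι Q ξ * blade Q e * bladeDeriv Q e u + bladeDeriv Q e u * blade Q e * ι Q ξ
      = (2 * (-1 : ℝ) ^ (n * (n + 1) / 2)) • ∑ j, ⟪e j, ξ⟫_ℝ • ι Q (u (e j)) := by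
  rw [bladeDeriv, Finset.mul_sum, Finset.sum_mul, Finset.sum_mul, ← Finset.sum_add_distrib,
    Finset.smul_sum]
  refine Finset.sum_congr rfl fun j _ => ?_
  set P := blade Q e
  set w := ι Q (e j) * ι Q (u (e j))
  have hUj : (fun i => if i = j then u (e i) else e i)
      = fun i => if i = j then u (e j) else e i := by
    ext i
    split_ifs with h <;> simp [h]
  have hL : _ = w * P := blade_ite_eq_mul_blade hQ he j (hu j)
  have hR : _ = -(P * w) := blade_ite_eq_neg_blade_mul hQ he j (hu j)
  calc ι Q ξ * P * blade Q (fun i => if i = j then u (e i) else e i)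
        + blade Q (fun i => if i = j then u (e i) else e i) * P * ι Q ξ
      = -(ι Q ξ * (P * P) * w) + w * (P * P) * ι Q ξ := by
        rw [hUj]
        nth_rw 1 [hR]
        rw [hL]
        noncomm_ring
    _ = algebraMap ℝ _ ((-1) ^ (n * (n + 1) / 2)) * (w * ι Q ξ - ι Q ξ * w) := by
        rw [blade_mul_self hQ he, ← Algebra.commutes _ (ι Q ξ), ← Algebra.commutes _ w]
        simp only [mul_sub, mul_assoc]
        abel
    _ = (2 * (-1 : ℝ) ^ (n * (n + 1) / 2)) • ⟪e j, ξ⟫_ℝ • ι Q (u (e j)) := by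
        rw [ι_mul_ι_mul_ι_sub_of_inner_eq_zero hQ (hξ j), ← Algebra.smul_def, smul_smul, smul_smul]
        ring_nf

end CliffordAlgebra

theorem stmt11_general
    {V : Type*} [NormedAddCommGroup V] [InnerProductSpace ℝ V]
    (Q : QuadraticForm ℝ V) (hQ : ∀ v : V, Q v = -‖v‖ ^ 2)
    {n : ℕ} (e : Fin n → V) (he : Orthonormal ℝ e)
    (u : V →ₗ[ℝ] V)
    (hu : ∀ j i : Fin n, ⟪u (e j), e i⟫_ℝ = 0) :
    ∀ ξ ∈ Submodule.span ℝ (Set.range e),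
      CliffordAlgebra.ι Q (u ξ)
        = (-(((-1 : ℝ) ^ (n * (n + 1) / 2 + 1)) / 2)) •
            (CliffordAlgebra.ι Q ξ
                * (List.ofFn fun i : Fin n => CliffordAlgebra.ι Q (e i)).prod
                * (∑ j : Fin n, (List.ofFn fun i : Fin n =>
                    CliffordAlgebra.ι Q (if i = j then u (e i) else e i)).prod)
              + (∑ j : Fin n, (List.ofFn fun i : Fin n =>
                    CliffordAlgebra.ι Q (if i = j then u (e i) else e i)).prod)
                * (List.ofFn fun i : Fin n => CliffordAlgebra.ι Q (e i)).prod
                * CliffordAlgebra.ι Q ξ) := by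
  intro ξ hξ
  obtain ⟨c, rfl⟩ := (Submodule.mem_span_range_iff_exists_fun ℝ).mp hξ
  have hξu : ∀ j, ⟪u (e j), ∑ i, c i • e i⟫_ℝ = 0 := by
    simp [inner_sum, inner_smul_right, hu]
  have key := CliffordAlgebra.ι_mul_blade_mul_bladeDeriv_add hQ he u hu hξu
  unfold CliffordAlgebra.bladeDeriv CliffordAlgebra.blade at key
  have hsign : -((-1 : ℝ) ^ (n * (n + 1) / 2 + 1) / 2) * (2 * (-1) ^ (n * (n + 1) / 2)) = 1 := by
    have hsq : (-1 : ℝ) ^ (n * (n + 1) / 2) * (-1) ^ (n * (n + 1) / 2) = 1 := by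
      rw [← mul_pow]
      norm_num
    linear_combination hsq
  rw [key, smul_smul, hsign, one_smul]
  simp [he.inner_right_fintype, map_sum, map_smul]

/-- Clifford-algebra formula for the action of a tangent vector `u` to the Grassmannian on a
vector `ξ` of the plane spanned by the orthonormal family `e`:
`ι(u ξ) = −(ε_n/2) • (ι(ξ) * P * U + U * P * ι(ξ))`, where `P = ι(e 0) * ⋯ * ι(e (n−1))`,
`U = ∑ⱼ ι(e 0) * ⋯ * ι(u (e j)) * ⋯ * ι(e (n−1))` and `ε_n = (−1)^(n(n+1)/2+1)`. -/
theorem stmt11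
    {V : Type*} [NormedAddCommGroup V] [InnerProductSpace ℝ V]
    (Q : QuadraticForm ℝ V) (hQ : ∀ v : V, Q v = -‖v‖ ^ 2)
    {n : ℕ} (hn : 1 ≤ n) (e : Fin n → V) (he : Orthonormal ℝ e)
    (u : V →ₗ[ℝ] V)
    (hu : ∀ j i : Fin n, ⟪u (e j), e i⟫_ℝ = 0) :
    ∀ ξ ∈ Submodule.span ℝ (Set.range e),
      CliffordAlgebra.ι Q (u ξ)
        = (-(((-1 : ℝ) ^ (n * (n + 1) / 2 + 1)) / 2)) •
            (CliffordAlgebra.ι Q ξ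
                * (List.ofFn fun i : Fin n => CliffordAlgebra.ι Q (e i)).prod
                * (∑ j : Fin n, (List.ofFn fun i : Fin n =>
                    CliffordAlgebra.ι Q (if i = j then u (e i) else e i)).prod)
              + (∑ j : Fin n, (List.ofFn fun i : Fin n =>
                    CliffordAlgebra.ι Q (if i = j then u (e i) else e i)).prod)
                * (List.ofFn fun i : Fin n => CliffordAlgebra.ι Q (e i)).prod
                * CliffordAlgebra.ι Q ξ) :=
  stmt11_general Q hQ e he u hu
end

section
/- Let κ, λ : ℝ → ℝ be continuous functions, fix t₀ ∈ ℝ and C ∈ ℂ, and define θ : ℝ → ℝ by θ t = ∫_{t₀}^{t} κ(τ) dτ and Z : ℝ → ℂ by Z t = (C − i • ∫_{t₀}^{t} λ(τ) • exp(−i θ(τ)) dτ) * exp(i θ(t)). Then Z is differentiable and satisfies for all t: deriv Z t = i * κ t * Z t − i * λ t. (This integrates the system A' = Bκ − λ, B' = −Aκ via Z = B + iA, arising from curves orthogonal to a congruence of affine planes in ℝ³.) -/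
open Complex

theorem hasDerivAt_variation_of_constants {A F : ℝ → ℂ} {a b : ℂ} {t : ℝ}
    (hA : HasDerivAt A a t) (hF : HasDerivAt F (b * exp (-A t)) t) :
    HasDerivAt (fun s => F s * exp (A s)) (a * (F t * exp (A t)) + b) t := by
  refine (hF.mul hA.cexp).congr_deriv ?_
  rw [mul_assoc b, ← exp_add, neg_add_cancel, exp_zero]
  ring

/-- The function `Z t = (C − i ∫_{t₀}^t λ(τ) exp(−i θ(τ)) dτ) * exp(i θ(t))`, with
`θ t = ∫_{t₀}^t κ`, is differentiable and solves `Z' = iκZ − iλ`. -/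
theorem stmt12
    (κ lam : ℝ → ℝ) (hκ : Continuous κ) (hlam : Continuous lam)
    (t₀ : ℝ) (C : ℂ) (θ : ℝ → ℝ) (Z : ℝ → ℂ)
    (hθ : ∀ t : ℝ, θ t = ∫ τ in t₀..t, κ τ)
    (hZ : ∀ t : ℝ, Z t =
      (C - Complex.I * ∫ τ in t₀..t, (lam τ : ℂ) * Complex.exp (-Complex.I * (θ τ : ℂ)))
        * Complex.exp (Complex.I * (θ t : ℂ))) :
    Differentiable ℝ Z ∧
      ∀ t : ℝ, deriv Z t = Complex.I * (κ t : ℂ) * Z t - Complex.I * (lam t : ℂ) := by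
  have hθ' (t : ℝ) : HasDerivAt θ (κ t) t :=
    funext hθ ▸ (hκ.integral_hasStrictDerivAt t₀ t).hasDerivAt
  have hθc : Continuous θ := continuous_iff_continuousAt.2 fun t => (hθ' t).continuousAt
  have hIθ' (t : ℝ) : HasDerivAt (fun s => I * (θ s : ℂ)) (I * κ t) t :=
    (hθ' t).ofReal_comp.const_mul I
  have hgc : Continuous fun τ => (lam τ : ℂ) * exp (-I * (θ τ : ℂ)) := by fun_prop
  have hF' (t : ℝ) : HasDerivAt
      (fun s => C - I * ∫ τ in t₀..s, (lam τ : ℂ) * exp (-I * (θ τ : ℂ)))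
      (-I * lam t * exp (-(I * θ t))) t := by
    have hint := (hgc.integral_hasStrictDerivAt t₀ t).hasDerivAt
    refine ((hint.const_mul I).const_sub C).congr_deriv ?_
    simp only [neg_mul, mul_assoc]
  have hZ' (t : ℝ) : HasDerivAt Z (I * κ t * Z t - I * lam t) t := by
    convert hasDerivAt_variation_of_constants (hIθ' t) (hF' t) using 1
    · exact funext hZ
    · rw [hZ]; ring
  exact ⟨fun t => (hZ' t).differentiableAt, fun t => (hZ' t).deriv⟩
end

section
/- Let κ, λ : ℝ → ℝ be functions and let A₁, B₁, A₂, B₂ : ℝ → ℝ be differentiable functions satisfying, for all t and for i = 1, 2: deriv A_i t = B_i t * κ t − λ t and deriv B_i t = −A_i t * κ t. Then the function t ↦ (A₁ t − A₂ t)² + (B₁ t − B₂ t)² is constant on ℝ. (Hence any two curves orthogonal to the same congruence of affine planes along a spherical curve are equidistant.) -/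
/-- Two solutions of the system `A' = Bκ − λ`, `B' = −Aκ` stay at constant distance:
`(A₁ − A₂)² + (B₁ − B₂)²` is constant. -/
theorem stmt13
    (κ lam : ℝ → ℝ) (A₁ B₁ A₂ B₂ : ℝ → ℝ)
    (hA₁ : Differentiable ℝ A₁) (hB₁ : Differentiable ℝ B₁)
    (hA₂ : Differentiable ℝ A₂) (hB₂ : Differentiable ℝ B₂)
    (hA₁' : ∀ t : ℝ, deriv A₁ t = B₁ t * κ t - lam t)
    (hB₁' : ∀ t : ℝ, deriv B₁ t = -(A₁ t * κ t))
    (hA₂' : ∀ t : ℝ, deriv A₂ t = B₂ t * κ t - lam t)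
    (hB₂' : ∀ t : ℝ, deriv B₂ t = -(A₂ t * κ t)) :
    ∃ c : ℝ, ∀ t : ℝ, (A₁ t - A₂ t) ^ 2 + (B₁ t - B₂ t) ^ 2 = c := by
  set f : ℝ → ℝ := fun t => (A₁ t - A₂ t) ^ 2 + (B₁ t - B₂ t) ^ 2 with hf
  have hdf : ∀ t : ℝ, HasDerivAt f 0 t := by
    intro t
    have h : HasDerivAt f
        (2 * (A₁ t - A₂ t) ^ 1 * (deriv A₁ t - deriv A₂ t)
          + 2 * (B₁ t - B₂ t) ^ 1 * (deriv B₁ t - deriv B₂ t)) t := by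
      exact ((((hA₁ t).hasDerivAt.sub (hA₂ t).hasDerivAt).pow 2).add
        (((hB₁ t).hasDerivAt.sub (hB₂ t).hasDerivAt).pow 2))
    convert h using 1
    rw [hA₁' t, hA₂' t, hB₁' t, hB₂' t]
    ring
  have : ∀ t : ℝ, f t = f 0 := by
    intro t
    exact is_const_of_deriv_eq_zero (fun x => (hdf x).differentiableAt)
      (fun x => (hdf x).deriv) t 0
  exact ⟨f 0, this⟩
end

section
/- Let α : ℝ → EuclideanSpace ℝ (Fin 3) be a smooth curve with ‖α t‖ = 1 and ‖deriv α t‖ = 1 for all t (a unit-speed curve on the unit sphere), and let λ : ℝ → ℝ be smooth. Set ν t := (α t) ×₃ (deriv α t). Then for every t₀ ∈ ℝ and every (a₀, b₀) ∈ ℝ² there exist differentiable functions A, B : ℝ → ℝ with A t₀ = a₀, B t₀ = b₀ such that the curve γ := λ • α + A • (deriv α) + B • ν satisfies: for every t, deriv γ t lies in the real span of α t (i.e. γ crosses orthogonally the congruence of affine planes t ↦ λ t • α t + (α t)^⊥). Thus there is a 2-parameter family of curves orthogonal to the given congruence of affine planes in ℝ³. -/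
open scoped Matrix
open Matrix Complex

noncomputable def crossCLM : EuclideanSpace ℝ (Fin 3) →L[ℝ] EuclideanSpace ℝ (Fin 3) →L[ℝ] EuclideanSpace ℝ (Fin 3) :=
  LinearMap.toContinuousLinearMap <|
    (LinearMap.toContinuousLinearMap.toLinearMap) ∘ₗ
      (((crossProduct : (Fin 3 → ℝ) →ₗ[ℝ] _).compl₁₂
        (WithLp.linearEquiv 2 ℝ (Fin 3 → ℝ)).toLinearMap
        (WithLp.linearEquiv 2 ℝ (Fin 3 → ℝ)).toLinearMap).compr₂
        (WithLp.linearEquiv 2 ℝ (Fin 3 → ℝ)).symm.toLinearMap)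

lemma crossCLM_apply (a b : EuclideanSpace ℝ (Fin 3)) :
    crossCLM a b = WithLp.toLp 2 (WithLp.ofLp a ⨯₃ WithLp.ofLp b) := rfl

lemma inner_eq_dot (x y : EuclideanSpace ℝ (Fin 3)) : (inner ℝ x y : ℝ) = WithLp.ofLp x ⬝ᵥ WithLp.ofLp y := by
  simp [PiLp.inner_apply, dotProduct, Fin.sum_univ_three, mul_comm]

lemma crossCLM_self (a : EuclideanSpace ℝ (Fin 3)) : crossCLM a a = 0 := by
  rw [crossCLM_apply, cross_self]; rfl

lemma cross_triple' (u v w : Fin 3 → ℝ) : u ⨯₃ (v ⨯₃ w) = (u ⬝ᵥ w) • v - (u ⬝ᵥ v) • w := by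
  ext i; fin_cases i <;>
    simp [cross_apply, dotProduct, Fin.sum_univ_three] <;> ring

lemma decompose (a b w : Fin 3 → ℝ) (haa : a ⬝ᵥ a = 1) (hbb : b ⬝ᵥ b = 1) (hab : a ⬝ᵥ b = 0)
    (haw : a ⬝ᵥ w = 0) (hbw : b ⬝ᵥ w = 0) : w = ((a ⨯₃ b) ⬝ᵥ w) • (a ⨯₃ b) := by
  set n := a ⨯₃ b with hn
  have h1 : w ⨯₃ n = 0 := by
    rw [hn, cross_triple', dotProduct_comm w b, dotProduct_comm w a, haw, hbw]
    simp
  have h2 : n ⨯₃ w = 0 := by rw [← cross_anticomm, h1, neg_zero]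
  have hnn : n ⬝ᵥ n = 1 := by
    rw [hn, cross_dot_cross, haa, hbb, hab]; ring
  have h3 : n ⨯₃ (n ⨯₃ w) = (n ⬝ᵥ w) • n - (n ⬝ᵥ n) • w := cross_triple' n n w
  rw [h2] at h3
  simp only [map_zero] at h3
  rw [hnn, one_smul] at h3
  exact (sub_eq_zero.mp h3.symm).symm

lemma decomposeE (a b w : EuclideanSpace ℝ (Fin 3)) (haa : (inner ℝ a a : ℝ) = 1)
    (hbb : (inner ℝ b b : ℝ) = 1) (hab : (inner ℝ a b : ℝ) = 0)
    (haw : (inner ℝ a w : ℝ) = 0) (hbw : (inner ℝ b w : ℝ) = 0) :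
    w = (inner ℝ (crossCLM a b) w : ℝ) • crossCLM a b := by
  have h := decompose a b w
    (by rw [← inner_eq_dot]; exact haa) (by rw [← inner_eq_dot]; exact hbb)
    (by rw [← inner_eq_dot]; exact hab) (by rw [← inner_eq_dot]; exact haw)
    (by rw [← inner_eq_dot]; exact hbw)
  apply WithLp.ofLp_injective 2
  rw [inner_eq_dot, crossCLM_apply]
  simpa using h

lemma cross_nuE (a b : EuclideanSpace ℝ (Fin 3)) (haa : (inner ℝ a a : ℝ) = 1)
    (hab : (inner ℝ a b : ℝ) = 0) : crossCLM a (crossCLM a b) = -b := by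
  have h := cross_triple' a a b
  have haa' : WithLp.ofLp a ⬝ᵥ WithLp.ofLp a = 1 := by rw [← inner_eq_dot]; exact haa
  have hab' : WithLp.ofLp a ⬝ᵥ WithLp.ofLp b = 0 := by rw [← inner_eq_dot]; exact hab
  rw [haa', hab'] at h
  apply WithLp.ofLp_injective 2
  rw [crossCLM_apply, crossCLM_apply]
  simp only [WithLp.ofLp_toLp]
  rw [h]
  simp

lemma ode_solve (g lam : ℝ → ℝ) (hg : Continuous g) (hlam : Continuous lam)
    (t₀ a₀ b₀ : ℝ) :
    ∃ A B : ℝ → ℝ, A t₀ = a₀ ∧ B t₀ = b₀ ∧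
      ∀ t, HasDerivAt A (g t * B t - lam t) t ∧ HasDerivAt B (-(g t * A t)) t := by
  set G : ℝ → ℝ := fun t => ∫ s in t₀..t, g s with hGdef
  have hG : ∀ t, HasDerivAt G (g t) t := fun t => (hg.integral_hasStrictDerivAt t₀ t).hasDerivAt
  have hGc : Continuous G := continuous_iff_continuousAt.2 fun t => (hG t).continuousAt
  set h : ℝ → ℂ := fun s => Complex.exp ((G s : ℂ) * I) * (lam s : ℂ) with hhdef
  have hhc : Continuous h := by fun_prop
  set F : ℝ → ℂ := fun t => ∫ s in t₀..t, h s with hFdef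
  have hF : ∀ t, HasDerivAt F (h t) t := fun t => (hhc.integral_hasStrictDerivAt t₀ t).hasDerivAt
  set z : ℝ → ℂ := fun t => Complex.exp (-((G t : ℂ) * I)) * ((⟨a₀, b₀⟩ : ℂ) - F t) with hzdef
  have hz : ∀ t, HasDerivAt z (-((g t : ℂ) * I) * z t - (lam t : ℂ)) t := by
    intro t
    have h1 : HasDerivAt (fun t => ((G t : ℂ))) ((g t : ℂ)) t := (hG t).ofReal_comp
    have h3 : HasDerivAt (fun t => Complex.exp (-((G t : ℂ) * I)))
        (Complex.exp (-((G t : ℂ) * I)) * (-((g t : ℂ) * I))) t := ((h1.mul_const I)).neg.cexp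
    have h5 := h3.mul ((hasDerivAt_const t ((⟨a₀, b₀⟩:ℂ))).sub (hF t))
    have key : Complex.exp (-((G t : ℂ) * I)) * Complex.exp ((G t : ℂ) * I) = 1 := by
      rw [← Complex.exp_add, neg_add_cancel, Complex.exp_zero]
    refine h5.congr_deriv (Eq.symm ?_)
    simp only [hzdef, hhdef, zero_sub, Pi.sub_apply]
    linear_combination (lam t : ℂ) * key
  have hzt₀ : z t₀ = ⟨a₀, b₀⟩ := by
    simp [hzdef, hFdef, hGdef, intervalIntegral.integral_same]
  refine ⟨fun t => (z t).re, fun t => (z t).im, by show (z t₀).re = a₀; rw [hzt₀],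
    by show (z t₀).im = b₀; rw [hzt₀], fun t => ⟨?_, ?_⟩⟩
  · have := Complex.reCLM.hasFDerivAt.comp_hasDerivAt t (hz t)
    refine this.congr_deriv (Eq.symm ?_)
    simp [Complex.ext_iff]
  · have := Complex.imCLM.hasFDerivAt.comp_hasDerivAt t (hz t)
    refine this.congr_deriv (Eq.symm ?_)
    simp [Complex.ext_iff]

/-- Given a unit-speed spherical curve `α` and a smooth function `λ`, defining the congruence
of affine planes `t ↦ λ t • α t + (α t)ᗮ`, through each initial condition `(a₀, b₀)` at `t₀`
there is a curve `γ = λ • α + A • α' + B • ν` crossing the congruence orthogonally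
(`γ'` collinear to `α`): a 2-parameter family of orthogonal curves. -/
theorem stmt15
    (α : ℝ → EuclideanSpace ℝ (Fin 3)) (hα : ContDiff ℝ (⊤ : ℕ∞) α)
    (hunit : ∀ t : ℝ, ‖α t‖ = 1) (hspeed : ∀ t : ℝ, ‖deriv α t‖ = 1)
    (lam : ℝ → ℝ) (hlam : ContDiff ℝ (⊤ : ℕ∞) lam)
    (ν : ℝ → EuclideanSpace ℝ (Fin 3)) (hν : ∀ t : ℝ, ν t = WithLp.toLp 2 (WithLp.ofLp (α t) ⨯₃ WithLp.ofLp (deriv α t))) :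
    ∀ t₀ a₀ b₀ : ℝ, ∃ A B : ℝ → ℝ,
      Differentiable ℝ A ∧ Differentiable ℝ B ∧ A t₀ = a₀ ∧ B t₀ = b₀ ∧
      ∀ t : ℝ, ∃ c : ℝ,
        deriv (fun τ => lam τ • α τ + A τ • deriv α τ + B τ • ν τ) t = c • α t := by
  intro t₀ a₀ b₀
  have hαi : ContDiff ℝ ((⊤:ℕ∞):WithTop ℕ∞) α := hα.of_le (by simp)
  have hd1 : ∀ t, HasDerivAt α (deriv α t) t := fun t => (hα.differentiable (by simp) t).hasDerivAt
  have hα' : ContDiff ℝ ((⊤:ℕ∞):WithTop ℕ∞) (deriv α) := (contDiff_infty_iff_deriv.mp hαi).2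
  have hd2 : ∀ t, HasDerivAt (deriv α) (deriv (deriv α) t) t :=
    fun t => (hα'.differentiable (by simp) t).hasDerivAt
  have hα''c : Continuous (deriv (deriv α)) := (contDiff_infty_iff_deriv.mp hα').2.continuous
  -- identify the Pi-instance deriv in hν with the Euclidean deriv
  have hν2 : ∀ s, ν s = crossCLM (α s) (deriv α s) := by
    intro s
    rw [hν s, crossCLM_apply]
  -- inner product facts
  have haa : ∀ t, (inner ℝ (α t) (α t) : ℝ) = 1 := fun t => by
    rw [real_inner_self_eq_norm_mul_norm, hunit, one_mul]
  have hbb : ∀ t, (inner ℝ (deriv α t) (deriv α t) : ℝ) = 1 := fun t => by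
    rw [real_inner_self_eq_norm_mul_norm, hspeed, one_mul]
  have hab : ∀ t, (inner ℝ (α t) (deriv α t) : ℝ) = 0 := by
    intro t
    have hc : HasDerivAt (fun s => (inner ℝ (α s) (α s) : ℝ))
        ((inner ℝ (α t) (deriv α t) : ℝ) + (inner ℝ (deriv α t) (α t) : ℝ)) t :=
      (hd1 t).inner ℝ (hd1 t)
    have he : (fun s => (inner ℝ (α s) (α s) : ℝ)) = fun _ => 1 := funext haa
    rw [he] at hc
    have h0 := hc.unique (hasDerivAt_const t 1)
    have hcm := real_inner_comm (α t) (deriv α t)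
    linarith
  have hbc : ∀ t, (inner ℝ (deriv α t) (deriv (deriv α) t) : ℝ) = 0 := by
    intro t
    have hc : HasDerivAt (fun s => (inner ℝ (deriv α s) (deriv α s) : ℝ))
        ((inner ℝ (deriv α t) (deriv (deriv α) t) : ℝ) +
          (inner ℝ (deriv (deriv α) t) (deriv α t) : ℝ)) t :=
      (hd2 t).inner ℝ (hd2 t)
    have he : (fun s => (inner ℝ (deriv α s) (deriv α s) : ℝ)) = fun _ => 1 := funext hbb
    rw [he] at hc
    have h0 := hc.unique (hasDerivAt_const t 1)
    have hcm := real_inner_comm (deriv α t) (deriv (deriv α) t)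
    linarith
  have hac : ∀ t, (inner ℝ (α t) (deriv (deriv α) t) : ℝ) = -1 := by
    intro t
    have hc : HasDerivAt (fun s => (inner ℝ (α s) (deriv α s) : ℝ))
        ((inner ℝ (α t) (deriv (deriv α) t) : ℝ) + (inner ℝ (deriv α t) (deriv α t) : ℝ)) t :=
      (hd1 t).inner ℝ (hd2 t)
    have he : (fun s => (inner ℝ (α s) (deriv α s) : ℝ)) = fun _ => 0 := funext hab
    rw [he] at hc
    have h0 := hc.unique (hasDerivAt_const t 0)
    have h1 := hbb t
    linarith
  -- geodesic curvature
  set g : ℝ → ℝ := fun t => (inner ℝ (deriv (deriv α) t) (ν t) : ℝ) with hgdef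
  have hνα : ∀ t, (inner ℝ (ν t) (α t) : ℝ) = 0 := by
    intro t
    rw [hν2 t, inner_eq_dot, crossCLM_apply, WithLp.ofLp_toLp, dotProduct_comm]
    exact dot_self_cross _ _
  -- decomposition of α''
  have hdecomp : ∀ t, deriv (deriv α) t = -α t + g t • ν t := by
    intro t
    have h := decomposeE (α t) (deriv α t) (deriv (deriv α) t + α t) (haa t) (hbb t) (hab t)
      (by rw [inner_add_right, hac t, haa t]; ring)
      (by rw [inner_add_right, hbc t, real_inner_comm, hab t]; ring)
    rw [← hν2 t] at h
    have hco : (inner ℝ (ν t) (deriv (deriv α) t + α t) : ℝ) = g t := by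
      rw [inner_add_right, hνα t, add_zero, real_inner_comm, hgdef]
    rw [hco] at h
    linear_combination (norm := module) h
  -- continuity of g
  have hνc : Continuous ν := by
    have hc : Continuous fun s => crossCLM (α s) (deriv α s) :=
      (crossCLM.continuous.comp hα.continuous).clm_apply hα'.continuous
    rw [funext hν2]
    exact hc
  have hgc : Continuous g := hα''c.inner hνc
  -- solve the ODE
  obtain ⟨A, B, hA₀, hB₀, hAB⟩ := ode_solve g lam hgc hlam.continuous t₀ a₀ b₀
  refine ⟨A, B, fun t => ((hAB t).1).differentiableAt, fun t => ((hAB t).2).differentiableAt,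
    hA₀, hB₀, fun t => ⟨deriv lam t - A t, ?_⟩⟩
  -- derivative of ν
  have hν' : HasDerivAt ν (crossCLM (α t) (deriv (deriv α) t)) t := by
    have h1 : HasDerivAt (fun s => crossCLM (α s)) (crossCLM (deriv α t)) t :=
      crossCLM.hasFDerivAt.comp_hasDerivAt t (hd1 t)
    have h2 := h1.clm_apply (hd2 t)
    simp only [crossCLM_self, ContinuousLinearMap.zero_apply, zero_add] at h2
    rw [show (fun s => crossCLM (α s) (deriv α s)) = ν from (funext hν2).symm] at h2
    exact h2
  -- α ⨯₃ α''
  have hx : crossCLM (α t) (deriv (deriv α) t) = (-(g t)) • deriv α t := by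
    rw [hdecomp t, map_add, map_neg, crossCLM_self, _root_.map_smul, hν2 t,
      cross_nuE (α t) (deriv α t) (haa t) (hab t)]
    module
  -- derivative of γ
  have hγ := (((hlam.differentiable (by simp) t).hasDerivAt.smul (hd1 t)).add
      ((hAB t).1.smul (hd2 t))).add ((hAB t).2.smul hν')
  rw [show deriv (fun τ => lam τ • α τ + A τ • deriv α τ + B τ • ν τ) t = _ from hγ.deriv, hx,
    hdecomp t]
  module
end
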